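/- Define a₁(ξ,η) = ⟨ξ⟩ − ⟨ξ/2+η⟩ − ⟨ξ/2−η⟩ for ξ, η ∈ ℝ², where ⟨x⟩ = √(1+|x|²). Then for all ξ, η ∈ ℝ², one has C₁/⟨|ξ|+|η|⟩ ≤ |a₁(ξ,η)| ≤ C₂·⟨|ξ|+|η|⟩ for absolute constants C₁, C₂ > 0. -/
import Mathlib


noncomputable abbrev jb (x : EuclideanSpace ℝ (Fin 2)) : ℝ := Real.sqrt (1 + ‖x‖ ^ 2)

noncomputable abbrev jbr (r : ℝ) : ℝ := Real.sqrt (1 + r ^ 2)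

noncomputable def a₁ (ξ η : EuclideanSpace ℝ (Fin 2)) : ℝ :=
  jb ξ - jb ((1 / 2 : ℝ) • ξ + η) - jb ((1 / 2 : ℝ) • ξ - η)

lemma jb_sq (x : EuclideanSpace ℝ (Fin 2)) : jb x ^ 2 = 1 + ‖x‖ ^ 2 :=
  Real.sq_sqrt (by positivity)

lemma jb_one_le (x : EuclideanSpace ℝ (Fin 2)) : 1 ≤ jb x := by
  rw [show (1:ℝ) = Real.sqrt 1 by simp]
  exact Real.sqrt_le_sqrt (by nlinarith [sq_nonneg ‖x‖])

lemma jb_norm_le (x : EuclideanSpace ℝ (Fin 2)) : ‖x‖ ≤ jb x := by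
  rw [show ‖x‖ = Real.sqrt (‖x‖^2) by rw [Real.sqrt_sq (norm_nonneg x)]]
  exact Real.sqrt_le_sqrt (by nlinarith)

lemma jbr_mono {r s : ℝ} (h : r ≤ s) (hr : 0 ≤ r) : jbr r ≤ jbr s :=
  Real.sqrt_le_sqrt (by nlinarith)

set_option maxHeartbeats 1000000 in
theorem stmt3 :
    ∃ C₁ > (0 : ℝ), ∃ C₂ > (0 : ℝ), ∀ ξ η : EuclideanSpace ℝ (Fin 2),
      C₁ / jbr (‖ξ‖ + ‖η‖) ≤ |a₁ ξ η| ∧ |a₁ ξ η| ≤ C₂ * jbr (‖ξ‖ + ‖η‖) := by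
  refine ⟨1/4, by norm_num, 2, by norm_num, fun ξ η => ?_⟩
  set u := (1 / 2 : ℝ) • ξ + η with hu
  set v := (1 / 2 : ℝ) • ξ - η with hv
  have huv : u + v = ξ := by rw [hu, hv]; module
  have ha : a₁ ξ η = jb (u + v) - jb u - jb v := by rw [a₁, huv]
  have h1u : (1:ℝ) ≤ jb u := jb_one_le u
  have h1v : (1:ℝ) ≤ jb v := jb_one_le v
  have hinner := real_inner_le_norm u v
  have hns := norm_add_sq_real u v
  have hprod : ‖u‖ * ‖v‖ ≤ jb u * jb v :=
    mul_le_mul (jb_norm_le u) (jb_norm_le v) (norm_nonneg v) (by linarith)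
  have hsum_pos : (0:ℝ) < jb u + jb v := by linarith
  -- key lower bound
  have hCsq : 1 + (1 + ‖u + v‖ ^ 2) ≤ (jb u + jb v) ^ 2 := by
    nlinarith [jb_sq u, jb_sq v]
  have hC : jb (u + v) ≤ jb u + jb v := by
    calc jb (u + v) ≤ Real.sqrt ((jb u + jb v) ^ 2) :=
          Real.sqrt_le_sqrt (by linarith)
    _ = jb u + jb v := Real.sqrt_sq hsum_pos.le
  have key : 1 / (2 * (jb u + jb v)) ≤ jb u + jb v - jb (u + v) := by
    rw [div_le_iff₀ (by linarith)]
    nlinarith [jb_sq (u + v), hCsq, hC, sq_nonneg (jb u + jb v - jb (u + v))]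
  have hneg : a₁ ξ η ≤ 0 := by
    rw [ha]
    have : 0 < 1 / (2 * (jb u + jb v)) := by positivity
    linarith
  have habs : |a₁ ξ η| = jb u + jb v - jb (u + v) := by
    rw [abs_of_nonpos hneg, ha]; ring
  -- comparing jb u, jb v with jbr (‖ξ‖ + ‖η‖)
  set s := ‖ξ‖ + ‖η‖ with hs
  have hhalf : ‖(1/2:ℝ) • ξ‖ + ‖η‖ ≤ s := by
    rw [norm_smul, Real.norm_eq_abs]
    have := norm_nonneg ξ
    rw [abs_of_nonneg (by norm_num : (0:ℝ) ≤ 1/2)]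
    linarith
  have hnu : ‖u‖ ≤ s := le_trans (hu ▸ norm_add_le _ _) hhalf
  have hnv : ‖v‖ ≤ s := le_trans (hv ▸ norm_sub_le _ _) hhalf
  have hjus : jb u ≤ jbr s := Real.sqrt_le_sqrt (by nlinarith [norm_nonneg u])
  have hjvs : jb v ≤ jbr s := Real.sqrt_le_sqrt (by nlinarith [norm_nonneg v])
  have hjs1 : (1:ℝ) ≤ jbr s := by
    rw [show (1:ℝ) = Real.sqrt 1 by simp]
    exact Real.sqrt_le_sqrt (by nlinarith [sq_nonneg s])
  have hjspos : (0:ℝ) < jbr s := by linarith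
  constructor
  · rw [habs]
    have h2 : 1 / (4 * jbr s) ≤ 1 / (2 * (jb u + jb v)) := by
      apply one_div_le_one_div_of_le (by linarith); linarith
    have h3 : (1/4) / jbr s = 1 / (4 * jbr s) := by ring
    linarith [key, h3 ▸ h2]
  · rw [habs]
    have h0 : 0 ≤ jb (u + v) := Real.sqrt_nonneg _
    linarith
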